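/- arXiv:math/9807079 — 8 statements merged into one kernel-verified Lean document; each statement's English description precedes it below -/
import Mathlib

section
/- Let I be a collection of i-element subsets of {1,...,n} such that no two distinct members of I are at Hamming distance 2 (i.e., no member is obtained from another by exchanging a single element). Then |I| ≤ (1/i) * C(n, i-1). -/
/-- A collection of `i`-element subsets of `{1,...,n}` no two distinct members of
which are at Hamming distance 2 (i.e., no member is obtained from another by
exchanging a single element) has at most `(1/i) * C(n, i-1)` members. -/
theorem stmt_1 (n i : ℕ) (hi : 1 ≤ i) (hin : i ≤ n)
    (𝓘 : Finset (Finset ℕ))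
    (hmem : ∀ I ∈ 𝓘, I ⊆ Finset.Icc 1 n ∧ I.card = i)
    (hcode : ∀ I ∈ 𝓘, ∀ J ∈ 𝓘, I ≠ J → (I ∩ J).card ≠ i - 1) :
    (𝓘.card : ℚ) ≤ (1 / (i : ℚ)) * (Nat.choose n (i - 1) : ℚ) := by
  have key : 𝓘.card * i ≤ Nat.choose n (i - 1) := by
    have hdisj : ∀ I ∈ 𝓘, ∀ J ∈ 𝓘, I ≠ J →
        Disjoint (I.powersetCard (i - 1)) (J.powersetCard (i - 1)) := by
      intro I hI J hJ hIJ
      rw [Finset.disjoint_left]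
      intro K hKI hKJ
      rw [Finset.mem_powersetCard] at hKI hKJ
      obtain ⟨hKI, hKc⟩ := hKI
      obtain ⟨hKJ, -⟩ := hKJ
      have hsub : K ⊆ I ∩ J := Finset.subset_inter hKI hKJ
      have h1 : i - 1 ≤ (I ∩ J).card := hKc ▸ Finset.card_le_card hsub
      have h2 : (I ∩ J).card ≤ i :=
        ((hmem I hI).2) ▸ Finset.card_le_card Finset.inter_subset_left
      have hne := hcode I hI J hJ hIJ
      have heq : (I ∩ J).card = i := by omega
      have hII : I ∩ J = I := Finset.eq_of_subset_of_card_le Finset.inter_subset_left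
        (by rw [heq, (hmem I hI).2])
      have hsubIJ : I ⊆ J := by rw [← hII]; exact Finset.inter_subset_right
      exact hIJ (Finset.eq_of_subset_of_card_le hsubIJ
        (by rw [(hmem I hI).2, (hmem J hJ).2]))
    have hcardS : (𝓘.biUnion (fun I => I.powersetCard (i - 1))).card = 𝓘.card * i := by
      rw [Finset.card_biUnion hdisj]
      rw [Finset.sum_congr rfl (fun I hI => ?_), Finset.sum_const, smul_eq_mul]
      rw [Finset.card_powersetCard, (hmem I hI).2]
      have : i - (i - 1) = 1 := by omega
      rw [← Nat.choose_symm (Nat.sub_le i 1), this, Nat.choose_one_right]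
    have hsub : 𝓘.biUnion (fun I => I.powersetCard (i - 1)) ⊆
        (Finset.Icc 1 n).powersetCard (i - 1) := by
      intro K hK
      rw [Finset.mem_biUnion] at hK
      obtain ⟨I, hI, hKI⟩ := hK
      rw [Finset.mem_powersetCard] at hKI ⊢
      exact ⟨hKI.1.trans (hmem I hI).1, hKI.2⟩
    calc 𝓘.card * i = _ := hcardS.symm
      _ ≤ ((Finset.Icc 1 n).powersetCard (i - 1)).card := Finset.card_le_card hsub
      _ = Nat.choose n (i - 1) := by
          rw [Finset.card_powersetCard, Nat.card_Icc]; norm_num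
  have hi0 : (0 : ℚ) < i := by exact_mod_cast hi
  rw [one_div, inv_mul_eq_div, le_div_iff₀ hi0]
  exact_mod_cast key
end

section
/- Let I be a collection of i-element subsets of {1,...,n} such that no member is obtained from another by exchanging a single element. Then |I| ≤ (1/(n+1)) * C(n+1, i). -/
/-!
Double counting of `(i-1)`-subsets: each member of the code contains `i` of them, and no
`(i-1)`-set lies in two members, since two `i`-sets sharing `i-1` elements differ by a single
exchange. Hence `|𝓘| * i ≤ C(n, i-1)`, and `(n+1) C(n, i-1) = i C(n+1, i)` finishes.
-/

open Finset

variable {α : Type*} [DecidableEq α] {r : ℕ}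

theorem Finset.disjoint_powersetCard_of_card_inter_ne {I J : Finset α}
    (hI : #I = r + 1) (hJ : #J = r + 1) (hne : I ≠ J) (hIJ : #(I ∩ J) ≠ r) :
    Disjoint (I.powersetCard r) (J.powersetCard r) := by
  refine disjoint_left.2 fun K hKI hKJ => hIJ ?_
  rw [mem_powersetCard] at hKI hKJ
  have hle : r ≤ #(I ∩ J) := hKI.2 ▸ card_le_card (subset_inter hKI.1 hKJ.1)
  have hlt : #(I ∩ J) < r + 1 := by
    have hsub : ¬ I ⊆ J := fun h => hne (eq_of_subset_of_card_le h (by omega))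
    exact hI ▸ card_lt_card (ssubset_of_subset_of_ne inter_subset_left
      fun h => hsub (h ▸ inter_subset_right))
  omega

theorem Finset.card_mul_le_choose_of_card_inter_ne (S : Finset α) (𝓘 : Finset (Finset α))
    (hmem : ∀ I ∈ 𝓘, I ⊆ S ∧ #I = r + 1)
    (hcode : ∀ I ∈ 𝓘, ∀ J ∈ 𝓘, I ≠ J → #(I ∩ J) ≠ r) :
    #𝓘 * (r + 1) ≤ (#S).choose r := by
  have hdisj : (𝓘 : Set (Finset α)).PairwiseDisjoint (powersetCard r) :=
    fun I hI J hJ hne => disjoint_powersetCard_of_card_inter_ne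
      (hmem I hI).2 (hmem J hJ).2 hne (hcode I hI J hJ hne)
  have hcard : #(𝓘.biUnion (powersetCard r)) = #𝓘 * (r + 1) := by
    rw [card_biUnion hdisj, sum_const_nat fun I hI => ?_]
    rw [card_powersetCard, (hmem I hI).2, Nat.choose_succ_self_right]
  have hsub : 𝓘.biUnion (powersetCard r) ⊆ S.powersetCard r :=
    biUnion_subset.2 fun I hI => powersetCard_mono (hmem I hI).1
  simpa only [hcard, card_powersetCard] using card_le_card hsub

theorem stmt_2_general (n i : ℕ) (hi : 1 ≤ i)
    (𝓘 : Finset (Finset ℕ))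
    (hmem : ∀ I ∈ 𝓘, I ⊆ Finset.Icc 1 n ∧ I.card = i)
    (hcode : ∀ I ∈ 𝓘, ∀ J ∈ 𝓘, I ≠ J → (I ∩ J).card ≠ i - 1) :
    (𝓘.card : ℚ) ≤ (1 / ((n : ℚ) + 1)) * (Nat.choose (n + 1) i : ℚ) := by
  obtain ⟨r, rfl⟩ := Nat.exists_eq_add_of_le' hi
  have hcount : #𝓘 * (r + 1) ≤ n.choose r := by
    simpa using card_mul_le_choose_of_card_inter_ne (Icc 1 n) 𝓘 hmem (by simpa using hcode)
  have hnat : #𝓘 * (n + 1) ≤ (n + 1).choose (r + 1) := by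
    refine Nat.le_of_mul_le_mul_right ?_ r.succ_pos
    calc #𝓘 * (n + 1) * (r + 1) = #𝓘 * (r + 1) * (n + 1) := by ring
      _ ≤ n.choose r * (n + 1) := Nat.mul_le_mul_right _ hcount
      _ = (n + 1).choose (r + 1) * (r + 1) := by rw [mul_comm, Nat.add_one_mul_choose_eq]
  rw [one_div, inv_mul_eq_div, le_div_iff₀ (by positivity)]
  exact_mod_cast hnat

/-- A collection of `i`-element subsets of `{1,...,n}` no member of which is
obtained from another by exchanging a single element (i.e., no two distinct
members are at Hamming distance 2) has at most `(1/(n+1)) * C(n+1, i)` members. -/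
theorem stmt_2 (n i : ℕ) (hi : 1 ≤ i) (hin : i ≤ n)
    (𝓘 : Finset (Finset ℕ))
    (hmem : ∀ I ∈ 𝓘, I ⊆ Finset.Icc 1 n ∧ I.card = i)
    (hcode : ∀ I ∈ 𝓘, ∀ J ∈ 𝓘, I ≠ J → (I ∩ J).card ≠ i - 1) :
    (𝓘.card : ℚ) ≤ (1 / ((n : ℚ) + 1)) * (Nat.choose (n + 1) i : ℚ) :=
  stmt_2_general n i hi 𝓘 hmem hcode
end

section
/- In the symmetric group S_n with the Bruhat order, u ≤ v if and only if for every i with 1 ≤ i ≤ n, the i-th partial sorted sequence of u is componentwise at most that of v; that is, u({1,...,i}) ≤ v({1,...,i}) where i-subsets are compared by sorting and comparing componentwise. -/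
/-- Number of inversions of a permutation of `Fin n`. -/
def invCount {n : ℕ} (w : Equiv.Perm (Fin n)) : ℕ :=
  (Finset.univ.filter fun p : Fin n × Fin n => p.1 < p.2 ∧ w p.2 < w p.1).card

/-- One step of the Bruhat order: `v = u·t` for a transposition `t`, with the number
of inversions increasing. -/
def bruhatStep {n : ℕ} (u v : Equiv.Perm (Fin n)) : Prop :=
  ∃ t : Equiv.Perm (Fin n), t.IsSwap ∧ v = u * t ∧ invCount u < invCount v

/-- The Bruhat order on `S_n`: the reflexive-transitive closure of `bruhatStep`. -/
def bruhatLE {n : ℕ} : Equiv.Perm (Fin n) → Equiv.Perm (Fin n) → Prop :=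
  Relation.ReflTransGen bruhatStep

/-
The Bruhat order is governed by the counts `countBelow w c (k ≤ ·)`, the number of positions
`j < c` with `w j ≥ k`; for sorted `c`-subsets, componentwise comparison is the same as
comparing these counts for every `k`. If `a < b` and `u a < u b`, passing to `u * swap a b`
raises the count by one exactly when `a < c ≤ b` and `u a < k ≤ u b`, so Bruhat steps, hence
the Bruhat order, only increase the counts. Conversely, let `u ≠ v` have counts bounded by
those of `v`, let `i` be the first position where they differ, so that `u i < v i`, and let `j`
be the first later position with `u j ∈ (u i, v i]`. Then `u * swap i j` is a Bruhat step above
`u` whose counts are still bounded by those of `v`; since inversions increase along steps,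
iterating reaches `v`.
-/

open Equiv Finset

namespace List

variable {α : Type*}

lemma Forall₂.countP_le {β : Type*} {R : α → β → Prop} {p : α → Bool} {q : β → Bool}
    (hpq : ∀ a b, R a b → p a → q b) {l₁ : List α} {l₂ : List β} (h : Forall₂ R l₁ l₂) :
    l₁.countP p ≤ l₂.countP q := by
  induction h with
  | nil => simp
  | @cons a b _ _ hab _ ih =>
    have := hpq a b hab
    rw [countP_cons, countP_cons]
    split_ifs <;> grind

variable [LinearOrder α]

lemma forall₂_le_of_countP_le :
    ∀ {l₁ l₂ : List α}, l₁.Pairwise (· ≤ ·) → l₂.Pairwise (· ≤ ·) → l₁.length = l₂.length →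
      (∀ k, l₁.countP (k ≤ ·) ≤ l₂.countP (k ≤ ·)) →
      Forall₂ (· ≤ ·) l₁ l₂
  | [], [], _, _, _, _ => .nil
  | a :: t, b :: t', h₁, h₂, hlen, h => by
    rw [pairwise_cons] at h₁ h₂
    rw [length_cons, length_cons, Nat.add_right_cancel_iff] at hlen
    have hab : a ≤ b := by
      by_contra! hba
      have hcount := h a
      rw [countP_eq_length.mpr (by simpa using h₁.1), countP_cons_of_neg (by simpa using hba)]
        at hcount
      have := countP_le_length (p := (a ≤ ·)) (l := t')
      simp only [length_cons] at hcount
      omega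
    refine .cons hab (forall₂_le_of_countP_le h₁.2 h₂.2 hlen fun k => ?_)
    by_cases hka : k ≤ a
    · rw [countP_eq_length.mpr (by simpa using fun x hx => hka.trans (h₁.1 x hx)),
        countP_eq_length.mpr (by simpa using fun x hx => (hka.trans hab).trans (h₂.1 x hx)), hlen]
    have hcount := h k
    rw [countP_cons_of_neg (by simpa using hka), countP_cons] at hcount
    by_cases hkb : k ≤ b
    · rw [countP_eq_length (l := t').mpr (by simpa using fun x hx => hkb.trans (h₂.1 x hx)),
        ← hlen]
      exact countP_le_length
    · simpa [hkb] using hcount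
  | [], _ :: _, _, _, hlen, _ | _ :: _, [], _, _, hlen, _ => by simp at hlen

lemma forall₂_le_iff_countP_le {l₁ l₂ : List α} (h₁ : l₁.Pairwise (· ≤ ·))
    (h₂ : l₂.Pairwise (· ≤ ·)) (hlen : l₁.length = l₂.length) :
    Forall₂ (· ≤ ·) l₁ l₂ ↔ ∀ k, l₁.countP (k ≤ ·) ≤ l₂.countP (k ≤ ·) :=
  ⟨fun h _ => h.countP_le fun _ _ hab hk => by simpa using (of_decide_eq_true hk).trans hab,
    forall₂_le_of_countP_le h₁ h₂ hlen⟩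

end List

lemma Finset.countP_sort {α : Type*} (r : α → α → Prop) [DecidableRel r] [IsTrans α r]
    [Std.Antisymm r] [Std.Total r] (s : Finset α) (p : α → Prop) [DecidablePred p] :
    (s.sort r).countP (p ·) = #{x ∈ s | p x} := by
  rw [← Multiset.coe_countP, sort_eq, Multiset.countP_eq_card_filter]
  rfl

lemma Finset.forall₂_sort_le_iff {α : Type*} [LinearOrder α] {s t : Finset α}
    (hst : #s = #t) :
    List.Forall₂ (· ≤ ·) (s.sort (· ≤ ·)) (t.sort (· ≤ ·)) ↔
      ∀ k, #{x ∈ s | k ≤ x} ≤ #{x ∈ t | k ≤ x} := by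
  rw [List.forall₂_le_iff_countP_le (pairwise_sort _ _) (pairwise_sort _ _)
    (by rw [length_sort, length_sort, hst])]
  simp only [countP_sort]

namespace Bruhat

variable {n : ℕ}

lemma swap_apply_lt_of_reversed {u : Perm (Fin n)} {a b p q : Fin n} (hab : a < b)
    (hu : u a < u b) (hpq : p < q) (hrev : swap a b q < swap a b p) (hinv : u q < u p) :
    u (swap a b q) < u (swap a b p) := by
  simp only [swap_apply_def] at hrev ⊢
  split_ifs at hrev ⊢ <;> subst_vars <;> omega

lemma invCount_mul_swap (u : Perm (Fin n)) (a b : Fin n) :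
    invCount (u * swap a b) =
      #{pq : Fin n × Fin n | swap a b pq.1 < swap a b pq.2 ∧ u pq.2 < u pq.1} := by
  refine card_equiv ((swap a b).prodCongr (swap a b)) fun pq => ?_
  rw [mem_filter, mem_filter]
  simp

lemma invCount_lt_invCount_mul_swap {u : Perm (Fin n)} {a b : Fin n} (hab : a < b)
    (hu : u a < u b) : invCount u < invCount (u * swap a b) := by
  set σ := swap a b
  -- Applying `σ` to exactly the pairs it reverses injects the inversions of `u` into the pairs
  -- counted by `invCount_mul_swap`, and `(b, a)` is missed.
  let ψ : Fin n × Fin n → Fin n × Fin n := fun pq =>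
    if σ pq.2 < σ pq.1 then (σ pq.1, σ pq.2) else pq
  rw [invCount_mul_swap, invCount, ← card_image_of_injOn (f := ψ) ?inj]
  case inj =>
    rintro ⟨p, q⟩ hpq ⟨p', q'⟩ hpq' h
    simp only [coe_filter, mem_univ, true_and, Set.mem_ofPred_eq] at hpq hpq'
    simp only [ψ] at h
    split_ifs at h <;> simp only [Prod.mk.injEq] at h ⊢ <;> grind
  refine card_lt_card ⟨fun pq hpq => ?_, fun hsub => ?_⟩
  · obtain ⟨⟨p, q⟩, hA, rfl⟩ := mem_image.mp hpq
    simp only [mem_filter, mem_univ, true_and] at hA ⊢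
    simp only [ψ]
    split_ifs with hrev
    · exact ⟨by simpa [σ] using hA.1, swap_apply_lt_of_reversed hab hu hA.1 hrev hA.2⟩
    · exact ⟨not_lt.mp hrev |>.lt_of_ne (σ.injective.ne hA.1.ne), hA.2⟩
  · have hba : (b, a) ∈ _ := hsub (by simp [mem_filter, hab, hu])
    obtain ⟨⟨p, q⟩, hA, h⟩ := mem_image.mp hba
    simp only [mem_filter, mem_univ, true_and] at hA
    simp only [ψ] at h
    split_ifs at h with hrev <;> simp only [Prod.mk.injEq] at h
    · obtain ⟨rfl, rfl⟩ : p = a ∧ q = b := by simpa [σ, swap_apply_eq_iff] using h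
      exact absurd hu (not_lt.mpr hA.2.le)
    · obtain ⟨rfl, rfl⟩ := h
      exact absurd hA.1 (not_lt.mpr hab.le)

lemma lt_of_invCount_lt_invCount_mul_swap {u : Perm (Fin n)} {a b : Fin n} (hab : a < b)
    (h : invCount u < invCount (u * swap a b)) : u a < u b := by
  refine (lt_or_gt_of_ne (u.injective.ne hab.ne)).resolve_right fun hba => ?_
  have := invCount_lt_invCount_mul_swap (u := u * swap a b) hab (by simpa using hba)
  rw [mul_assoc, swap_mul_self, mul_one] at this
  exact lt_asymm h this

def countBelow (w : Perm (Fin n)) (c : ℕ) (P : ℕ → Prop) [DecidablePred P] : ℕ :=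
  #{j : Fin n | (j : ℕ) < c ∧ P (w j)}

section countBelow

variable (P : ℕ → Prop) [DecidablePred P]

lemma countBelow_congr {u v : Perm (Fin n)} {c : ℕ}
    (h : ∀ j : Fin n, (j : ℕ) < c → u j = v j) :
    countBelow u c P = countBelow v c P := by
  unfold countBelow
  congr 1
  exact filter_congr fun j _ => and_congr_right fun hj => by rw [h j hj]

lemma countBelow_mono (w : Perm (Fin n)) {c c' : ℕ} (h : c ≤ c') :
    countBelow w c P ≤ countBelow w c' P :=
  card_le_card <| monotone_filter_right _ fun _ _ hj => ⟨hj.1.trans_le h, hj.2⟩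

lemma countBelow_eq_of_forall_not (w : Perm (Fin n)) {c c' : ℕ} (h : c ≤ c')
    (hP : ∀ j : Fin n, c ≤ j → (j : ℕ) < c' → ¬P (w j)) :
    countBelow w c' P = countBelow w c P := by
  unfold countBelow
  congr 1
  refine filter_congr fun j _ => ⟨fun hj => ⟨?_, hj.2⟩, fun hj => ⟨hj.1.trans_le h, hj.2⟩⟩
  by_contra hcj
  exact hP j (not_lt.mp hcj) hj.1 hj.2

lemma countBelow_succ (w : Perm (Fin n)) (i : Fin n) :
    countBelow w (i + 1) P = countBelow w i P + if P (w i) then 1 else 0 := by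
  have hdiff : ∑ j : Fin n, ((if (j : ℕ) < i + 1 ∧ P (w j) then 1 else 0 : ℤ) -
      if (j : ℕ) < i ∧ P (w j) then 1 else 0) = if P (w i) then 1 else 0 := by
    rw [Fintype.sum_eq_single i fun j hj => ?_]
    · simp
    · have := Fin.val_ne_of_ne hj
      by_cases hP : P (w j) <;> simp only [hP, and_true, and_false] <;> split_ifs <;> omega
  simp only [countBelow, card_filter, ← Nat.cast_inj (R := ℤ)]
  push_cast at hdiff ⊢
  rw [sum_sub_distrib] at hdiff
  linarith

lemma countBelow_le_eq_add (w : Perm (Fin n)) (c : ℕ) {k k' : ℕ} (hk : k ≤ k') :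
    countBelow w c (k ≤ ·) =
      countBelow w c (k' ≤ ·) + countBelow w c (fun x => k ≤ x ∧ x < k') := by
  simp only [countBelow, card_filter, ← sum_add_distrib]
  refine sum_congr rfl fun j _ => ?_
  split_ifs <;> omega

end countBelow

lemma countBelow_mul_swap {u : Perm (Fin n)} {a b : Fin n} (hab : a < b) (hu : u a < u b)
    (c k : ℕ) :
    countBelow (u * swap a b) c (k ≤ ·) =
      countBelow u c (k ≤ ·) +
        if (a : ℕ) < c ∧ c ≤ b ∧ (u a : ℕ) < k ∧ k ≤ u b then 1 else 0 := by
  have hreindex : countBelow (u * swap a b) c (k ≤ ·) =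
      #{j | (swap a b j : ℕ) < c ∧ k ≤ (u j : ℕ)} := by
    refine card_equiv (swap a b) fun j => ?_
    rw [mem_filter, mem_filter]
    simp
  have hdiff : ∑ j, ((if (swap a b j : ℕ) < c ∧ k ≤ (u j : ℕ) then 1 else 0 : ℤ) -
      if (j : ℕ) < c ∧ k ≤ (u j : ℕ) then 1 else 0) =
      if (a : ℕ) < c ∧ c ≤ b ∧ (u a : ℕ) < k ∧ k ≤ u b then 1 else 0 := by
    rw [Fintype.sum_eq_add a b hab.ne fun j hj => by simp [swap_apply_of_ne_of_ne hj.1 hj.2]]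
    rw [Fin.lt_def] at hab hu
    simp only [swap_apply_left, swap_apply_right]
    split_ifs <;> omega
  rw [hreindex, countBelow, card_filter, card_filter, ← Nat.cast_inj (R := ℤ)]
  push_cast at hdiff ⊢
  rw [sum_sub_distrib] at hdiff
  linarith

def RankLE (u v : Perm (Fin n)) : Prop :=
  ∀ c, 1 ≤ c → c ≤ n → ∀ k, countBelow u c (k ≤ ·) ≤ countBelow v c (k ≤ ·)

lemma rankLE_mul_swap {u : Perm (Fin n)} {a b : Fin n} (hab : a < b) (hu : u a < u b) :
    RankLE u (u * swap a b) := fun c _ _ k => by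
  rw [countBelow_mul_swap hab hu]
  exact Nat.le_add_right _ _

lemma rankLE_of_bruhatStep {u v : Perm (Fin n)} (h : bruhatStep u v) : RankLE u v := by
  obtain ⟨_, ⟨a, b, hne, rfl⟩, rfl, hinv⟩ := h
  rcases hne.lt_or_gt with hab | hba
  · exact rankLE_mul_swap hab (lt_of_invCount_lt_invCount_mul_swap hab hinv)
  · rw [swap_comm] at hinv ⊢
    exact rankLE_mul_swap hba (lt_of_invCount_lt_invCount_mul_swap hba hinv)

lemma rankLE_of_bruhatLE {u v : Perm (Fin n)} (h : bruhatLE u v) : RankLE u v := by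
  induction h with
  | refl => exact fun c _ _ k => le_rfl
  | tail _ hstep ih =>
    exact fun c h₁ h₂ k => (ih c h₁ h₂ k).trans (rankLE_of_bruhatStep hstep c h₁ h₂ k)

lemma countBelow_lt_of_gap {u v : Perm (Fin n)} {i : Fin n} {c k : ℕ}
    (hagree : ∀ j : Fin n, (j : ℕ) < i → u j = v j)
    (hgap : ∀ j : Fin n, i < j → (j : ℕ) < c → ¬((u i : ℕ) < u j ∧ (u j : ℕ) ≤ v i))
    (hic : (i : ℕ) < c) (hk : (u i : ℕ) < k) (hkv : k ≤ v i)
    (hc : countBelow u c (v i + 1 ≤ ·) ≤ countBelow v c (v i + 1 ≤ ·)) :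
    countBelow u c (k ≤ ·) < countBelow v c (k ≤ ·) := by
  have hkm : k ≤ v i + 1 := by omega
  calc countBelow u c (k ≤ ·)
      = countBelow u c (v i + 1 ≤ ·) + countBelow u c (fun x => k ≤ x ∧ x < v i + 1) :=
        countBelow_le_eq_add u c hkm
    _ = countBelow u c (v i + 1 ≤ ·) + countBelow v i (fun x => k ≤ x ∧ x < v i + 1) := by
        congr 1
        rw [countBelow_eq_of_forall_not _ u hic.le, countBelow_congr _ hagree]
        intro j hij hjc hj
        rcases (Fin.le_def.mpr hij).eq_or_lt with rfl | hij
        · omega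
        · exact hgap j hij hjc ⟨by omega, by omega⟩
    _ < countBelow v c (v i + 1 ≤ ·) +
          countBelow v (i + 1) (fun x => k ≤ x ∧ x < v i + 1) := by
        rw [countBelow_succ, if_pos ⟨hkv, Nat.lt_add_one _⟩]
        omega
    _ ≤ countBelow v c (v i + 1 ≤ ·) + countBelow v c (fun x => k ≤ x ∧ x < v i + 1) :=
        Nat.add_le_add_left (countBelow_mono _ v hic) _
    _ = countBelow v c (k ≤ ·) := (countBelow_le_eq_add v c hkm).symm

lemma exists_bruhatStep_of_rankLE {u v : Perm (Fin n)} (h : RankLE u v) (huv : u ≠ v) :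
    ∃ w, bruhatStep u w ∧ RankLE w v := by
  obtain ⟨i, hi, hmin⟩ :=
    wellFounded_lt.has_min {i | u i ≠ v i} (not_forall.mp (mt Equiv.ext huv))
  have hagree : ∀ j : Fin n, (j : ℕ) < i → u j = v j :=
    fun j hj => not_not.mp fun hne => hmin j hne hj
  have hlt : u i < v i := by
    have hrank := h (i + 1) (by omega) i.isLt (u i)
    rw [countBelow_succ, countBelow_succ, countBelow_congr _ hagree, if_pos le_rfl] at hrank
    refine lt_of_le_of_ne (Fin.le_def.mpr ?_) hi
    by_contra hvu
    rw [if_neg hvu] at hrank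
    omega
  have hvi : i < u.symm (v i) := by
    refine lt_of_le_of_ne (not_lt.mp fun hlt => ?_)
      fun heq => hi (u.symm_apply_eq.mp heq.symm).symm
    have := hagree _ hlt
    rw [apply_symm_apply] at this
    exact hlt.ne (v.injective this).symm
  obtain ⟨j, ⟨hij, huj, hjv⟩, hjmin⟩ := wellFounded_lt.has_min
    {j | i < j ∧ u i < u j ∧ u j ≤ v i} ⟨u.symm (v i), hvi, by simpa using hlt, by simp⟩
  refine ⟨u * swap i j,
    ⟨swap i j, ⟨i, j, hij.ne, rfl⟩, rfl, invCount_lt_invCount_mul_swap hij huj⟩,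
    fun c hc₁ hcn k => ?_⟩
  rw [countBelow_mul_swap hij huj]
  split_ifs with hwin
  · refine countBelow_lt_of_gap hagree (fun p hip hpc hp => hjmin p ⟨hip, hp⟩ ?_) hwin.1
      hwin.2.2.1 (hwin.2.2.2.trans hjv) (h c hc₁ hcn _)
    exact Fin.lt_def.mpr (by omega)
  · exact h c hc₁ hcn k

lemma invCount_le_mul_self (w : Perm (Fin n)) : invCount w ≤ n * n :=
  (card_filter_le _ _).trans (by simp)

lemma bruhatLE_of_rankLE {u v : Perm (Fin n)} (h : RankLE u v) : bruhatLE u v := by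
  by_cases huv : u = v
  · exact huv ▸ .refl
  obtain ⟨w, hstep, hw⟩ := exists_bruhatStep_of_rankLE h huv
  exact .head hstep (bruhatLE_of_rankLE hw)
termination_by n * n - invCount u
decreasing_by
  obtain ⟨-, -, -, hinv⟩ := hstep
  have := invCount_le_mul_self w
  omega

lemma bruhatLE_iff_rankLE {u v : Perm (Fin n)} : bruhatLE u v ↔ RankLE u v :=
  ⟨rankLE_of_bruhatLE, bruhatLE_of_rankLE⟩

lemma injective_val_apply (w : Perm (Fin n)) : Function.Injective fun j => (w j : ℕ) :=
  Fin.val_injective.comp w.injective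

lemma card_filter_le_image (w : Perm (Fin n)) (c k : ℕ) :
    #{x ∈ (univ.filter fun j : Fin n => (j : ℕ) < c).image (fun j => (w j : ℕ)) | k ≤ x} =
      countBelow w c (k ≤ ·) := by
  rw [filter_image, card_image_of_injective _ (injective_val_apply w), filter_filter]
  rfl

end Bruhat

/-- Ehresmann's criterion: `u ≤ v` in the Bruhat order on `S_n` if and only if for
every `1 ≤ i ≤ n`, the image of the initial segment of size `i` under `u` is
componentwise at most the one under `v` (sorting both sets increasingly and
comparing entry by entry). -/
theorem stmt_7 (n : ℕ) (u v : Equiv.Perm (Fin n)) :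
    bruhatLE u v ↔ ∀ i : ℕ, 1 ≤ i → i ≤ n →
      List.Forall₂ (· ≤ ·)
        (((Finset.univ.filter fun j : Fin n => (j : ℕ) < i).image
          fun j => (u j : ℕ)).sort (· ≤ ·))
        (((Finset.univ.filter fun j : Fin n => (j : ℕ) < i).image
          fun j => (v j : ℕ)).sort (· ≤ ·)) := by
  rw [Bruhat.bruhatLE_iff_rankLE, Bruhat.RankLE]
  refine forall₃_congr fun c _ _ => ?_
  rw [Finset.forall₂_sort_le_iff (by
    rw [card_image_of_injective _ (Bruhat.injective_val_apply u),
      card_image_of_injective _ (Bruhat.injective_val_apply v)])]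
  simp only [Bruhat.card_filter_le_image]
end

section
/- Let Φ be a root system with simple roots α_1,...,α_r and fundamental weights ω_1,...,ω_r. For each i, let R(i) be the set of positive roots whose expansion in simple roots has nonzero coefficient of α_i. Then the map α ↦ s_α(ω_i) is injective from R(i) into the Weyl group orbit W·ω_i minus {ω_i}, and s_α(ω_i) = ω_i for positive roots α not in R(i). -/
/-!
Expanding a positive root `β = ∑ c_j α_j` and pairing with `ω_i` gives
`(ω_i, β) = c_i (α_i, α_i) / 2`. Hence `s_β` fixes `ω_i` exactly when `c_i = 0`. If
`s_β(ω_i) = s_γ(ω_i)` with `c_i ≠ 0`, the two displacement vectors are nonzero multiples of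
`β` and of `γ` that coincide, so `β` is proportional to `γ`, and reducedness gives `β = γ`.
-/

/-- The reflection in the vector `β`, acting on `v` by
`s_β(v) = v - (v, β^∨) β` where `β^∨ = 2β/(β,β)`. -/
noncomputable def reflAlong {V : Type*} [NormedAddCommGroup V] [InnerProductSpace ℝ V]
    (β v : V) : V :=
  v - (2 * (inner ℝ v β : ℝ) / (inner ℝ β β : ℝ)) • β

section

variable {V : Type*} [NormedAddCommGroup V] [InnerProductSpace ℝ V]

theorem reflAlong_eq_self_iff (β v : V) : reflAlong β v = v ↔ inner ℝ v β = 0 := by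
  by_cases hβ : β = 0 <;> simp [reflAlong, hβ]

theorem exists_eq_smul_of_reflAlong_eq {β γ v : V} (hv : inner ℝ v β ≠ (0 : ℝ))
    (h : reflAlong β v = reflAlong γ v) : ∃ t : ℝ, β = t • γ := by
  have hβ : β ≠ 0 := by rintro rfl; simp at hv
  have hcoeff : 2 * (inner ℝ v β : ℝ) / inner ℝ β β ≠ 0 :=
    div_ne_zero (mul_ne_zero two_ne_zero hv) (inner_self_ne_zero.mpr hβ)
  simp only [reflAlong, sub_right_inj] at h
  refine ⟨(2 * (inner ℝ v β : ℝ) / inner ℝ β β)⁻¹ * (2 * inner ℝ v γ / inner ℝ γ γ), ?_⟩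
  rw [mul_smul, ← h, inv_smul_smul₀ hcoeff]

theorem inner_self_ne_zero_of_pairing_eq_one {w a : V}
    (h : 2 * (inner ℝ w a : ℝ) / inner ℝ a a = 1) : inner ℝ a a ≠ (0 : ℝ) := by
  rintro h0
  rw [h0, div_zero] at h
  exact zero_ne_one h

theorem inner_sum_smul_of_pairing_eq_ite {ι : Type*} [Fintype ι] [DecidableEq ι]
    {α ω : ι → V}
    (hω : ∀ i j, (2 * (inner ℝ (ω i) (α j) : ℝ) / (inner ℝ (α j) (α j) : ℝ))
      = if i = j then 1 else 0)
    (c : ι → ℝ) (i : ι) :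
    inner ℝ (ω i) (∑ j, c j • α j) = c i * inner ℝ (α i) (α i) / 2 := by
  rw [inner_sum, Finset.sum_eq_single i]
  · have h := hω i i
    rw [if_pos rfl] at h
    have hαα := inner_self_ne_zero_of_pairing_eq_one h
    field_simp at h
    rw [real_inner_smul_right, ← h]
    ring
  · intro j _ hji
    have h := hω i j
    rw [if_neg hji.symm, div_eq_zero_iff] at h
    rcases h with h | h
    · simp [real_inner_smul_right, (mul_eq_zero.mp h).resolve_left two_ne_zero]
    · simp [inner_self_eq_zero.mp h]
  · simp

end

theorem stmt_9_general {V : Type*} [NormedAddCommGroup V] [InnerProductSpace ℝ V]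
    (r : ℕ) (Φ Pos : Finset V)
    (hPosSub : ↑Pos ⊆ (Φ : Set V))
    (hreduced : ∀ β ∈ Pos, ∀ γ ∈ Pos, ∀ t : ℝ, β = t • γ → β = γ)
    (α : Fin r → V)
    (coeff : V → Fin r → ℝ)
    (hcoeff : ∀ β ∈ Pos, β = ∑ j, coeff β j • α j ∧ ∀ j, 0 ≤ coeff β j)
    (ω : Fin r → V)
    (hω : ∀ i j, (2 * (inner ℝ (ω i) (α j) : ℝ) / (inner ℝ (α j) (α j) : ℝ))
            = if i = j then 1 else 0)
    (i : Fin r) :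
    Set.InjOn (fun β => reflAlong β (ω i)) {β | β ∈ Pos ∧ coeff β i ≠ 0} ∧
    (∀ β ∈ Pos, coeff β i ≠ 0 →
      (∃ l : List V, (∀ γ ∈ l, γ ∈ Φ) ∧ reflAlong β (ω i) = l.foldr reflAlong (ω i)) ∧
        reflAlong β (ω i) ≠ ω i) ∧
    (∀ β ∈ Pos, coeff β i = 0 → reflAlong β (ω i) = ω i) := by
  have hinner : ∀ β ∈ Pos, inner ℝ (ω i) β = coeff β i * inner ℝ (α i) (α i) / 2 := by
    intro β hβ
    have h := inner_sum_smul_of_pairing_eq_ite hω (coeff β) i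
    rwa [← (hcoeff β hβ).1] at h
  have hαα := inner_self_ne_zero_of_pairing_eq_one (by simpa using hω i i)
  have hne : ∀ β ∈ Pos, coeff β i ≠ 0 → inner ℝ (ω i) β ≠ (0 : ℝ) := by
    intro β hβ hc
    rw [hinner β hβ]
    exact div_ne_zero (mul_ne_zero hc hαα) two_ne_zero
  refine ⟨?_, fun β hβ hc => ⟨⟨[β], by simpa using hPosSub hβ, rfl⟩, ?_⟩, fun β hβ hc => ?_⟩
  · rintro β ⟨hβ, hcβ⟩ γ ⟨hγ, -⟩ h
    obtain ⟨t, ht⟩ := exists_eq_smul_of_reflAlong_eq (hne β hβ hcβ) h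
    exact hreduced β hβ γ hγ t ht
  · exact (reflAlong_eq_self_iff β _).not.mpr (hne β hβ hc)
  · exact (reflAlong_eq_self_iff β _).mpr (by simp [hinner β hβ, hc])

/-- Let `Φ` be a (reduced) root system with positive roots `Pos`, simple roots
`α_1,...,α_r`, and fundamental weights `ω_1,...,ω_r` (characterized by
`(ω_i, α_j^∨) = δ_{ij}`).  Let `R(i)` be the set of positive roots whose expansion
in the simple roots has nonzero coefficient of `α_i`.  Then `α ↦ s_α(ω_i)` is
injective on `R(i)`, sends each `α ∈ R(i)` into the Weyl group orbit `W·ω_i` minus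
`{ω_i}`, and `s_α(ω_i) = ω_i` for every positive root `α ∉ R(i)`. -/
theorem stmt_9 {V : Type*} [NormedAddCommGroup V] [InnerProductSpace ℝ V]
    (r : ℕ) (Φ Pos : Finset V)
    (hPosSub : ↑Pos ⊆ (Φ : Set V)) (hzero : (0 : V) ∉ Φ)
    (hPosNeg : ∀ β : V, β ∈ Φ ↔ (β ∈ Pos ∨ -β ∈ Pos))
    (hreduced : ∀ β ∈ Pos, ∀ γ ∈ Pos, ∀ t : ℝ, β = t • γ → β = γ)
    (α : Fin r → V) (hα : ∀ i, α i ∈ Pos)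
    (coeff : V → Fin r → ℝ)
    (hcoeff : ∀ β ∈ Pos, β = ∑ j, coeff β j • α j ∧ ∀ j, 0 ≤ coeff β j)
    (ω : Fin r → V)
    (hω : ∀ i j, (2 * (inner ℝ (ω i) (α j) : ℝ) / (inner ℝ (α j) (α j) : ℝ))
            = if i = j then 1 else 0)
    (i : Fin r) :
    Set.InjOn (fun β => reflAlong β (ω i)) {β | β ∈ Pos ∧ coeff β i ≠ 0} ∧
    (∀ β ∈ Pos, coeff β i ≠ 0 →
      (∃ l : List V, (∀ γ ∈ l, γ ∈ Φ) ∧ reflAlong β (ω i) = l.foldr reflAlong (ω i)) ∧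
        reflAlong β (ω i) ≠ ω i) ∧
    (∀ β ∈ Pos, coeff β i = 0 → reflAlong β (ω i) = ω i) :=
  stmt_9_general r Φ Pos hPosSub hreduced α coeff hcoeff ω hω i
end

section
/- Let k ≥ 1 and let U be the set of permutations u of [1,4k] that map [1,k] ∪ [2k+1,3k] onto [1,2k] and are increasing on each of the blocks [1,k], [k+1,2k], [2k+1,3k], [3k+1,4k]. For every subset I of [1,4k] with k < |I| < 3k and I not componentwise ≤ the corresponding initial-segment image of the doubly-reversing permutation w (the longest element of S_{2k}×S_{2k}), the number of u ∈ U with I = u([1,|I|]) is at most C(2k,k). -/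
/-- The set `U` of permutations of `[1,4k]` (modelled `0`-indexed on `Fin (4k)`)
that map `[1,k] ∪ [2k+1,3k]` onto `[1,2k]`, and are increasing on each of the
blocks `[1,k]`, `[k+1,2k]`, `[2k+1,3k]`, `[3k+1,4k]`. -/
def Ublocks (k : ℕ) : Set (Equiv.Perm (Fin (4 * k))) :=
  {u |
    ((Finset.univ.filter fun j : Fin (4 * k) =>
        (j : ℕ) < k ∨ (2 * k ≤ (j : ℕ) ∧ (j : ℕ) < 3 * k)).image u =
      Finset.univ.filter fun j : Fin (4 * k) => (j : ℕ) < 2 * k) ∧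
    ∀ x y : Fin (4 * k), x < y →
      ((y : ℕ) < k ∨ (k ≤ (x : ℕ) ∧ (y : ℕ) < 2 * k) ∨
        (2 * k ≤ (x : ℕ) ∧ (y : ℕ) < 3 * k) ∨ 3 * k ≤ (x : ℕ)) →
      u x < u y}

/-- The doubly-reversing permutation `w`, the longest element of
`S_{2k} × S_{2k} ⊆ S_{4k}`: in `1`-indexed terms it sends `j ↦ 2k+1-j` for
`j ≤ 2k` and `j ↦ 6k+1-j` for `j > 2k`. -/
def wRev (k : ℕ) : Fin (4 * k) → Fin (4 * k) := fun j =>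
  ⟨if (j : ℕ) < 2 * k then 2 * k - 1 - (j : ℕ) else 6 * k - 1 - (j : ℕ), by
    have := j.isLt; split <;> omega⟩

/-- Componentwise comparison of subsets of `Fin m`: sort both sets increasingly
and compare entry by entry. -/
def finsetLE {m : ℕ} (A B : Finset (Fin m)) : Prop :=
  List.Forall₂ (· ≤ ·) ((A.image Fin.val).sort (· ≤ ·)) ((B.image Fin.val).sort (· ≤ ·))

/-- Two maps that are strictly increasing on a finset and have the same image
on it agree on it. -/
lemma eq_on_of_image_eq {n : ℕ} (u u' : Equiv.Perm (Fin n)) (B : Finset (Fin n))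
    (hu : ∀ x ∈ B, ∀ y ∈ B, x < y → u x < u y)
    (hu' : ∀ x ∈ B, ∀ y ∈ B, x < y → u' x < u' y)
    (him : B.image u = B.image u') :
    ∀ x ∈ B, u x = u' x := by
  classical
  have hc : B.card = B.card := rfl
  set e := B.orderEmbOfFin hc with he
  have hmem : ∀ j, e j ∈ B := fun j => Finset.orderEmbOfFin_mem B hc j
  have hcard : (B.image u).card = B.card :=
    Finset.card_image_of_injective _ u.injective
  have hcard' : (B.image u').card = B.card :=
    Finset.card_image_of_injective _ u'.injective
  have h1 : (fun j => u (e j)) = ⇑((B.image u).orderEmbOfFin hcard) :=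
    Finset.orderEmbOfFin_unique hcard (fun j => Finset.mem_image_of_mem u (hmem j))
      (fun a b hab => hu _ (hmem a) _ (hmem b) ((B.orderEmbOfFin hc).strictMono hab))
  have h2 : (fun j => u' (e j)) = ⇑((B.image u).orderEmbOfFin hcard) :=
    Finset.orderEmbOfFin_unique hcard
      (fun j => by rw [him]; exact Finset.mem_image_of_mem u' (hmem j))
      (fun a b hab => hu' _ (hmem a) _ (hmem b) ((B.orderEmbOfFin hc).strictMono hab))
  have heq : (fun j => u (e j)) = (fun j => u' (e j)) := h1.trans h2.symm
  intro x hx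
  have hxr : x ∈ Set.range e := by
    rw [he, Finset.range_orderEmbOfFin]; exact hx
  obtain ⟨j, hj⟩ := hxr
  have := congrFun heq j
  simpa [hj] using this

lemma img_sdiff {n : ℕ} (u : Equiv.Perm (Fin n)) {A B C : Finset (Fin n)}
    (h : (A ∪ B).image u = C) (hd : Disjoint A B) :
    B.image u = C \ A.image u := by
  rw [← h, Finset.image_union]
  exact (Finset.union_sdiff_cancel_left
    ((Finset.disjoint_image u.injective).mpr hd)).symm

lemma inter_sdiff_of_union {α : Type*} [DecidableEq α] {Y Z W : Finset α}
    (hY : Y ⊆ W) (hZ : Disjoint Z W) :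
    (Y ∪ Z) ∩ W = Y ∧ (Y ∪ Z) \ W = Z := by
  have hZ' : ∀ x, x ∈ Z → x ∉ W := fun x hx => Finset.disjoint_left.mp hZ hx
  constructor
  · ext x
    simp only [Finset.mem_inter, Finset.mem_union]
    constructor
    · rintro ⟨hx | hx, hw⟩
      · exact hx
      · exact absurd hw (hZ' x hx)
    · intro hx; exact ⟨Or.inl hx, hY hx⟩
  · ext x
    simp only [Finset.mem_sdiff, Finset.mem_union]
    constructor
    · rintro ⟨hx | hx, hw⟩
      · exact absurd (hY hx) hw
      · exact hx
    · intro hx; exact ⟨Or.inr hx, hZ' x hx⟩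

lemma card_le_of_inj {α : Type*} [Finite α] {m k : ℕ} (T : Finset (Fin m))
    (hT : T.card = 2 * k) (F : α → Finset (Fin m)) (hinj : Function.Injective F)
    (hmem : ∀ a, F a ∈ T.powersetCard k) :
    Nat.card α ≤ Nat.choose (2 * k) k := by
  classical
  have h : Nat.card α ≤ Nat.card {S // S ∈ T.powersetCard k} := by
    apply Nat.card_le_card_of_injective (fun a => (⟨F a, hmem a⟩ : {S // S ∈ T.powersetCard k}))
    intro a b hab
    exact hinj (congrArg Subtype.val hab)
  have h2 : Nat.card {S // S ∈ T.powersetCard k} = Nat.choose (2 * k) k := by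
    rw [Nat.card_eq_fintype_card, Fintype.card_coe, Finset.card_powersetCard, hT]
  omega

/-- For any subset `I` of `[1,4k]` with `k < |I| < 3k` which is not componentwise
`≤ w([1,|I|])` (where `w` is the doubly-reversing permutation), the number of
`u ∈ U` with `I = u([1,|I|])` is at most `C(2k,k)`. -/
theorem stmt_13 (k : ℕ) (hk : 1 ≤ k) (I : Finset (Fin (4 * k)))
    (h1 : k < I.card) (h2 : I.card < 3 * k)
    (h3 : ¬ finsetLE I
      ((Finset.univ.filter fun j : Fin (4 * k) => (j : ℕ) < I.card).image (wRev k))) :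
    Nat.card {u : Equiv.Perm (Fin (4 * k)) // u ∈ Ublocks k ∧
        (Finset.univ.filter fun j : Fin (4 * k) => (j : ℕ) < I.card).image u = I}
      ≤ Nat.choose (2 * k) k := by
  classical
  clear h3
  set i := I.card with hidef
  set B1 : Finset (Fin (4*k)) := Finset.univ.filter (fun j => (j:ℕ) < k) with hB1
  set B2 : Finset (Fin (4*k)) := Finset.univ.filter (fun j => k ≤ (j:ℕ) ∧ (j:ℕ) < 2*k) with hB2
  set B3 : Finset (Fin (4*k)) := Finset.univ.filter (fun j => 2*k ≤ (j:ℕ) ∧ (j:ℕ) < 3*k) with hB3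
  set B4 : Finset (Fin (4*k)) := Finset.univ.filter (fun j => 3*k ≤ (j:ℕ)) with hB4
  set J2 : Finset (Fin (4*k)) := Finset.univ.filter (fun j : Fin (4*k) => (j:ℕ) < 2*k) with hJ2
  -- membership characterizations
  have memB1 : ∀ j : Fin (4*k), j ∈ B1 ↔ (j:ℕ) < k := by
    intro j; rw [hB1]; simp
  have memB2 : ∀ j : Fin (4*k), j ∈ B2 ↔ k ≤ (j:ℕ) ∧ (j:ℕ) < 2*k := by
    intro j; rw [hB2]; simp
  have memB3 : ∀ j : Fin (4*k), j ∈ B3 ↔ 2*k ≤ (j:ℕ) ∧ (j:ℕ) < 3*k := by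
    intro j; rw [hB3]; simp
  have memB4 : ∀ j : Fin (4*k), j ∈ B4 ↔ 3*k ≤ (j:ℕ) := by
    intro j; rw [hB4]; simp
  have memJ2 : ∀ j : Fin (4*k), j ∈ J2 ↔ (j:ℕ) < 2*k := by
    intro j; rw [hJ2]; simp
  -- monotonicity on the blocks
  have mono1 : ∀ u : Equiv.Perm (Fin (4*k)), u ∈ Ublocks k →
      ∀ x ∈ B1, ∀ y ∈ B1, x < y → u x < u y := by
    intro u hu x hx y hy hxy
    refine hu.2 x y hxy ?_
    rw [memB1] at hx hy; omega
  have mono2 : ∀ u : Equiv.Perm (Fin (4*k)), u ∈ Ublocks k →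
      ∀ x ∈ B2, ∀ y ∈ B2, x < y → u x < u y := by
    intro u hu x hx y hy hxy
    refine hu.2 x y hxy ?_
    rw [memB2] at hx hy; omega
  have mono3 : ∀ u : Equiv.Perm (Fin (4*k)), u ∈ Ublocks k →
      ∀ x ∈ B3, ∀ y ∈ B3, x < y → u x < u y := by
    intro u hu x hx y hy hxy
    refine hu.2 x y hxy ?_
    rw [memB3] at hx hy; omega
  have mono4 : ∀ u : Equiv.Perm (Fin (4*k)), u ∈ Ublocks k →
      ∀ x ∈ B4, ∀ y ∈ B4, x < y → u x < u y := by
    intro u hu x hx y hy hxy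
    refine hu.2 x y hxy ?_
    rw [memB4] at hx hy; omega
  -- image of B1 ∪ B3 is J2
  have hBU : B1 ∪ B3 = Finset.univ.filter
      (fun j : Fin (4*k) => (j:ℕ) < k ∨ (2*k ≤ (j:ℕ) ∧ (j:ℕ) < 3*k)) := by
    ext j
    rw [Finset.mem_union, memB1 j, memB3 j]
    simp
  have h13 : ∀ u : Equiv.Perm (Fin (4*k)), u ∈ Ublocks k →
      (B1 ∪ B3).image u = J2 := by
    intro u hu
    rw [hBU, hJ2]
    exact hu.1
  have huniv : ∀ u : Equiv.Perm (Fin (4*k)),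
      (Finset.univ : Finset (Fin (4*k))).image u = Finset.univ := by
    intro u
    ext x
    simp only [Finset.mem_image, Finset.mem_univ, iff_true, true_and]
    exact ⟨u.symm x, u.apply_symm_apply x⟩
  have hsplit : (B1 ∪ B3) ∪ (B2 ∪ B4) = (Finset.univ : Finset (Fin (4*k))) := by
    ext j
    simp only [Finset.mem_union, memB1 j, memB2 j, memB3 j, memB4 j, Finset.mem_univ, iff_true]
    omega
  have hd1324 : Disjoint (B1 ∪ B3) (B2 ∪ B4) := by
    rw [Finset.disjoint_left]
    intro a ha hb
    rw [Finset.mem_union, memB1 a, memB3 a] at ha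
    rw [Finset.mem_union, memB2 a, memB4 a] at hb
    omega
  have h24 : ∀ u : Equiv.Perm (Fin (4*k)), u ∈ Ublocks k →
      (B2 ∪ B4).image u = Finset.univ \ J2 := by
    intro u hu
    have := img_sdiff u (A := B1 ∪ B3) (B := B2 ∪ B4) (C := Finset.univ)
      (by rw [hsplit]; exact huniv u) hd1324
    rw [this, h13 u hu]
  -- cardinalities
  have cardB1 : B1.card = k := by
    have heq : B1 = (Finset.Ico 0 k).attachFin
        (fun m hm => by simp only [Finset.mem_Ico] at hm; omega) := by
      ext j
      rw [memB1, Finset.mem_attachFin, Finset.mem_Ico]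
      omega
    rw [heq, Finset.card_attachFin, Nat.card_Ico]
    omega
  have cardB2 : B2.card = k := by
    have heq : B2 = (Finset.Ico k (2*k)).attachFin
        (fun m hm => by simp only [Finset.mem_Ico] at hm; omega) := by
      ext j
      rw [memB2, Finset.mem_attachFin, Finset.mem_Ico]
    rw [heq, Finset.card_attachFin, Nat.card_Ico]
    omega
  have cardJ2 : J2.card = 2 * k := by
    have heq : J2 = (Finset.Ico 0 (2*k)).attachFin
        (fun m hm => by simp only [Finset.mem_Ico] at hm; omega) := by
      ext j
      rw [memJ2, Finset.mem_attachFin, Finset.mem_Ico]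
      omega
    rw [heq, Finset.card_attachFin, Nat.card_Ico]
    omega
  have cardJ2c : ((Finset.univ : Finset (Fin (4*k))) \ J2).card = 2 * k := by
    rw [Finset.card_sdiff_of_subset (Finset.subset_univ _), Finset.card_univ, Fintype.card_fin, cardJ2]
    omega
  set S := {u : Equiv.Perm (Fin (4 * k)) // u ∈ Ublocks k ∧
      (Finset.univ.filter fun j : Fin (4 * k) => (j : ℕ) < i).image u = I} with hS
  by_cases hcase : i ≤ 2 * k
  · -- first case : i ≤ 2k ; injection u ↦ u '' B2
    set C : Finset (Fin (4*k)) := Finset.univ.filter (fun j => k ≤ (j:ℕ) ∧ (j:ℕ) < i) with hC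
    have hJiC : (Finset.univ.filter fun j : Fin (4 * k) => (j : ℕ) < i) = B1 ∪ C := by
      ext j
      rw [Finset.mem_union, memB1, hC]
      simp only [Finset.mem_filter, Finset.mem_univ, true_and]
      omega
    have imB1 : ∀ u : Equiv.Perm (Fin (4*k)), u ∈ Ublocks k →
        (Finset.univ.filter fun j : Fin (4 * k) => (j : ℕ) < i).image u = I →
        B1.image u = I ∩ J2 := by
      intro u hu hI
      have hY : B1.image u ⊆ J2 := by
        rw [← h13 u hu]
        exact Finset.image_subset_image Finset.subset_union_left
      have hZ : Disjoint (C.image u) J2 := by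
        rw [← h13 u hu]
        refine (Finset.disjoint_image u.injective).mpr ?_
        rw [Finset.disjoint_left]
        intro a ha hb
        rw [hC, Finset.mem_filter] at ha
        rw [Finset.mem_union, memB1 a, memB3 a] at hb
        omega
      have hI' : I = B1.image u ∪ C.image u := by
        rw [← Finset.image_union, ← hJiC]
        exact hI.symm
      rw [hI']
      exact ((inter_sdiff_of_union hY hZ).1).symm
    have imB3 : ∀ u : S, B3.image u.1 = J2 \ (I ∩ J2) := by
      intro u
      have := img_sdiff u.1 (A := B1) (B := B3) (C := J2) (h13 u.1 u.2.1)
        (by rw [Finset.disjoint_left]; intro a ha hb; rw [memB1] at ha; rw [memB3] at hb; omega)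
      rw [this, imB1 u.1 u.2.1 u.2.2]
    have imB4 : ∀ u : S, B4.image u.1 = (Finset.univ \ J2) \ B2.image u.1 := by
      intro u
      exact img_sdiff u.1 (A := B2) (B := B4) (C := Finset.univ \ J2) (h24 u.1 u.2.1)
        (by rw [Finset.disjoint_left]; intro a ha hb; rw [memB2] at ha; rw [memB4] at hb; omega)
    refine card_le_of_inj (Finset.univ \ J2) cardJ2c (fun u : S => B2.image u.1) ?_ ?_
    · -- injectivity
      intro u v huv
      have huv' : B2.image u.1 = B2.image v.1 := huv
      apply Subtype.ext
      apply Equiv.ext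
      intro x
      have hx : x ∈ B1 ∨ x ∈ B2 ∨ x ∈ B3 ∨ x ∈ B4 := by
        rw [memB1, memB2, memB3, memB4]
        omega
      rcases hx with hx | hx | hx | hx
      · exact eq_on_of_image_eq u.1 v.1 B1 (mono1 _ u.2.1) (mono1 _ v.2.1)
          ((imB1 u.1 u.2.1 u.2.2).trans (imB1 v.1 v.2.1 v.2.2).symm) x hx
      · exact eq_on_of_image_eq u.1 v.1 B2 (mono2 _ u.2.1) (mono2 _ v.2.1) huv' x hx
      · exact eq_on_of_image_eq u.1 v.1 B3 (mono3 _ u.2.1) (mono3 _ v.2.1)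
          ((imB3 u).trans (imB3 v).symm) x hx
      · refine eq_on_of_image_eq u.1 v.1 B4 (mono4 _ u.2.1) (mono4 _ v.2.1) ?_ x hx
        rw [imB4 u, imB4 v, huv']
    · -- membership in powersetCard
      intro u
      rw [Finset.mem_powersetCard]
      constructor
      · have : B2.image u.1 ⊆ (B2 ∪ B4).image u.1 :=
          Finset.image_subset_image Finset.subset_union_left
        rw [h24 u.1 u.2.1] at this
        exact this
      · rw [Finset.card_image_of_injective _ u.1.injective, cardB2]
  · -- second case : i > 2k ; injection u ↦ u '' B1
    push_neg at hcase
    set D : Finset (Fin (4*k)) := Finset.univ.filter (fun j => 2*k ≤ (j:ℕ) ∧ (j:ℕ) < i) with hD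
    have hJiD : (Finset.univ.filter fun j : Fin (4 * k) => (j : ℕ) < i) = (B1 ∪ D) ∪ B2 := by
      ext j
      rw [Finset.mem_union, Finset.mem_union, memB1, memB2, hD]
      simp only [Finset.mem_filter, Finset.mem_univ, true_and]
      omega
    have imB2 : ∀ u : Equiv.Perm (Fin (4*k)), u ∈ Ublocks k →
        (Finset.univ.filter fun j : Fin (4 * k) => (j : ℕ) < i).image u = I →
        B2.image u = I \ J2 := by
      intro u hu hI
      have hY : (B1 ∪ D).image u ⊆ J2 := by
        rw [← h13 u hu]
        refine Finset.image_subset_image ?_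
        intro a ha
        rw [Finset.mem_union, memB1, hD, Finset.mem_filter] at ha
        rw [Finset.mem_union, memB1, memB3]
        simp only [Finset.mem_univ, true_and] at ha
        omega
      have hZ : Disjoint (B2.image u) J2 := by
        rw [← h13 u hu]
        refine (Finset.disjoint_image u.injective).mpr ?_
        rw [Finset.disjoint_left]
        intro a ha hb
        rw [memB2] at ha
        rw [Finset.mem_union, memB1 a, memB3 a] at hb
        omega
      have hI' : I = (B1 ∪ D).image u ∪ B2.image u := by
        rw [← Finset.image_union, ← hJiD]
        exact hI.symm
      rw [hI']
      exact ((inter_sdiff_of_union hY hZ).2).symm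
    have imB3 : ∀ u : S, B3.image u.1 = J2 \ B1.image u.1 := by
      intro u
      exact img_sdiff u.1 (A := B1) (B := B3) (C := J2) (h13 u.1 u.2.1)
        (by rw [Finset.disjoint_left]; intro a ha hb; rw [memB1] at ha; rw [memB3] at hb; omega)
    have imB4 : ∀ u : S, B4.image u.1 = (Finset.univ \ J2) \ (I \ J2) := by
      intro u
      have := img_sdiff u.1 (A := B2) (B := B4) (C := Finset.univ \ J2) (h24 u.1 u.2.1)
        (by rw [Finset.disjoint_left]; intro a ha hb; rw [memB2] at ha; rw [memB4] at hb; omega)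
      rw [this, imB2 u.1 u.2.1 u.2.2]
    refine card_le_of_inj J2 cardJ2 (fun u : S => B1.image u.1) ?_ ?_
    · intro u v huv
      have huv' : B1.image u.1 = B1.image v.1 := huv
      apply Subtype.ext
      apply Equiv.ext
      intro x
      have hx : x ∈ B1 ∨ x ∈ B2 ∨ x ∈ B3 ∨ x ∈ B4 := by
        rw [memB1, memB2, memB3, memB4]
        omega
      rcases hx with hx | hx | hx | hx
      · exact eq_on_of_image_eq u.1 v.1 B1 (mono1 _ u.2.1) (mono1 _ v.2.1) huv' x hx
      · exact eq_on_of_image_eq u.1 v.1 B2 (mono2 _ u.2.1) (mono2 _ v.2.1)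
          ((imB2 u.1 u.2.1 u.2.2).trans (imB2 v.1 v.2.1 v.2.2).symm) x hx
      · refine eq_on_of_image_eq u.1 v.1 B3 (mono3 _ u.2.1) (mono3 _ v.2.1) ?_ x hx
        rw [imB3 u, imB3 v, huv']
      · exact eq_on_of_image_eq u.1 v.1 B4 (mono4 _ u.2.1) (mono4 _ v.2.1)
          ((imB4 u).trans (imB4 v).symm) x hx
    · intro u
      rw [Finset.mem_powersetCard]
      constructor
      · have : B1.image u.1 ⊆ (B1 ∪ B3).image u.1 :=
          Finset.image_subset_image Finset.subset_union_left
        rw [h13 u.1 u.2.1] at this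
        exact this
      · rw [Finset.card_image_of_injective _ u.1.injective, cardB1]
end

section
/- Let W be a finite Coxeter group with Bruhat order, and let B(W) be its base: the set of elements that are not the supremum (least upper bound, when it exists) of any subset of W not containing them. Then the map w ↦ {b ∈ B(W) : b ≤ w} is an order embedding of W into the boolean lattice of subsets of B(W), and any subset B' of W for which this map (with B replaced by B') is an order embedding must contain B(W). -/
/-- The Lascoux–Schützenberger theorem on bases, for a finite Coxeter group `W`
with the Bruhat order `le` (the reflexive-transitive closure of `u < ut` for
reflections `t = w s_i w⁻¹` increasing the length).  Define the base `B(W)` as the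
set of elements `a` that are not the supremum (least upper bound) of any subset of
`W` not containing `a`.  Then `w ↦ {b ∈ B(W) : b ≤ w}` is an order embedding of
`W` into the boolean lattice of subsets of `B(W)` (i.e. `u ≤ v` iff the
corresponding sets are contained in one another), and any subset `B'` of `W` for
which this map is an order embedding must contain `B(W)`. -/
theorem stmt_14 {r : ℕ} {W : Type*} [Group W] [Finite W] {M : CoxeterMatrix (Fin r)}
    (cs : CoxeterSystem M W)
    (le : W → W → Prop)
    (hle : le = Relation.ReflTransGen fun u v => ∃ (w : W) (i : Fin r),
      v = u * (w * cs.simple i * w⁻¹) ∧ cs.length u < cs.length v)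
    (base : Set W)
    (hbase : base = {a | ∀ Q : Set W,
      ((∀ q ∈ Q, le q a) ∧ ∀ b, (∀ q ∈ Q, le q b) → le a b) → a ∈ Q}) :
    (∀ u v : W, le u v ↔ {b | b ∈ base ∧ le b u} ⊆ {b | b ∈ base ∧ le b v}) ∧
    (∀ B' : Set W,
      (∀ u v : W, le u v ↔ {b | b ∈ B' ∧ le b u} ⊆ {b | b ∈ B' ∧ le b v}) →
      base ⊆ B') := by
  have hrefl : ∀ w : W, le w w := by
    intro w; rw [hle]
  have htrans : ∀ {a b c : W}, le a b → le b c → le a c := by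
    rw [hle]; exact fun h1 h2 => h1.trans h2
  have hmono : ∀ a b : W, le a b → a ≠ b → cs.length a < cs.length b := by
    rw [hle]
    intro a b h
    induction h with
    | refl => exact fun h => absurd rfl h
    | @tail x y hax hxy ih =>
      intro _
      obtain ⟨w, i, -, hlt⟩ := hxy
      rcases eq_or_ne a x with h | h
      · exact h ▸ hlt
      · exact lt_trans (ih h) hlt
  have hbase_iff : ∀ a : W, a ∈ base ↔ ∀ Q : Set W,
      ((∀ q ∈ Q, le q a) ∧ ∀ b, (∀ q ∈ Q, le q b) → le a b) → a ∈ Q := by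
    subst hbase; intro a; exact Iff.rfl
  -- every w is the least upper bound of the base elements below it
  have key : ∀ n, ∀ w : W, cs.length w = n → ∀ c : W,
      (∀ b, b ∈ base → le b w → le b c) → le w c := by
    intro n
    induction n using Nat.strong_induction_on with
    | _ n ih =>
      intro w hw c hc
      by_cases hwb : w ∈ base
      · exact hc w hwb (hrefl w)
      · rw [hbase_iff] at hwb
        push_neg at hwb
        obtain ⟨Q, ⟨hub, hlub⟩, hwQ⟩ := hwb
        refine hlub c ?_
        intro q hq
        have hqw := hub q hq
        have hne : q ≠ w := fun h => hwQ (h ▸ hq)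
        have hlt : cs.length q < n := hw ▸ hmono q w hqw hne
        exact ih _ hlt q rfl c (fun b hb hbq => hc b hb (htrans hbq hqw))
  constructor
  · intro u v
    constructor
    · rintro huv b ⟨hb, hbu⟩
      exact ⟨hb, htrans hbu huv⟩
    · intro hsub
      exact key _ u rfl v (fun b hb hbu => (hsub ⟨hb, hbu⟩).2)
  · intro B' hB' a ha
    rw [hbase_iff] at ha
    refine ha {b | b ∈ B' ∧ le b a} ⟨fun q hq => hq.2, fun c hc => ?_⟩ |>.1
    refine (hB' a c).mpr ?_
    rintro b ⟨hb, hba⟩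
    exact ⟨hb, hc b ⟨hb, hba⟩⟩
end

section
/- Let P be a finite poset. Define the base B(P) to be the set of elements a ∈ P that are not the supremum of any subset of P not containing a. Then for all a, b ∈ P: a ≤ b if and only if {c ∈ B(P) : c ≤ a} ⊆ {c ∈ B(P) : c ≤ b}. -/
/-- Let `P` be a finite poset with unique minimal and maximal elements in which
every subset with an upper bound has a supremum (a least upper bound).  Define the
base `B(P)` as the set of elements `a ∈ P` that are not the supremum of any subset
of `P` not containing `a`.  Then for all `a, b ∈ P`:
`a ≤ b` iff `{c ∈ B(P) : c ≤ a} ⊆ {c ∈ B(P) : c ≤ b}`. -/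
theorem stmt_15 {P : Type*} [Fintype P] [PartialOrder P]
    (hsup : ∀ Q : Set P, (upperBounds Q).Nonempty → ∃ a, IsLeast (upperBounds Q) a)
    (hmin : ∃ m : P, ∀ x, m ≤ x) (hmax : ∃ M : P, ∀ x, x ≤ M)
    (base : Set P)
    (hbase : base = {a | ∀ Q : Set P, IsLeast (upperBounds Q) a → a ∈ Q})
    (a b : P) :
    a ≤ b ↔ {c | c ∈ base ∧ c ≤ a} ⊆ {c | c ∈ base ∧ c ≤ b} := by
  subst hbase
  obtain ⟨M, hM⟩ := hmax
  have key : ∀ x : P,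
      IsLeast (upperBounds {c | (∀ Q : Set P, IsLeast (upperBounds Q) c → c ∈ Q) ∧ c ≤ x}) x := by
    intro x
    induction x using WellFoundedLT.induction with
    | _ x ih =>
      obtain ⟨s, hs⟩ :=
        hsup {c | (∀ Q : Set P, IsLeast (upperBounds Q) c → c ∈ Q) ∧ c ≤ x} ⟨M, fun y _ => hM y⟩
      have hsx : s ≤ x := hs.2 (fun y hy => hy.2)
      by_cases hx : ∀ Q : Set P, IsLeast (upperBounds Q) x → x ∈ Q
      · exact ⟨fun y hy => hy.2, fun y hy => hy ⟨hx, le_refl x⟩⟩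
      · push_neg at hx
        obtain ⟨Q, hQ, hxQ⟩ := hx
        have hqlt : ∀ q ∈ Q, q < x := fun q hq =>
          lt_of_le_of_ne (hQ.1 hq) (fun h => hxQ (h ▸ hq))
        have hub : s ∈ upperBounds Q := by
          intro q hq
          exact (ih q (hqlt q hq)).2 (fun c hc => hs.1 ⟨hc.1, hc.2.trans (hqlt q hq).le⟩)
        have hxs : x = s := le_antisymm (hQ.2 hub) hsx
        subst hxs; exact hs
  constructor
  · intro hab c hc; exact ⟨hc.1, hc.2.trans hab⟩
  · intro hsub
    exact (key a).2 (fun c hc => (hsub hc).2)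
end

section
/- Let I be a collection of nonempty proper subsets of {1,...,n} such that for every nonempty proper subset I of {1,...,n} and every pair of elements x ∈ I, y ∉ I, at least one of I and (I \ {x}) ∪ {y} belongs to I. Then |I| ≥ ((n-1)/(n+1)) * (2^n - 1). -/
/-!
With `n = |U|`, the nonempty proper subsets of `U` missing from `𝓘` form a family `𝒢` in which
no set arises from another by exchanging one element. Hence no `(k-1)`-set lies in two members
of the layer `𝒢ₖ` of `k`-sets, so `k·|𝒢ₖ| ≤ C(n, k-1)`, i.e.
`(n+1)·|𝒢ₖ| ≤ C(n+1, k)`. Summing over `0 < k < n` gives `(n+1)·|𝒢| ≤ 2^(n+1) - n - 3`, and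
`|𝓘| ≥ 2^n - 2 - |𝒢|` is the claimed bound.
-/

open Finset

lemma sum_Ico_choose_add {n : ℕ} (hn : 1 ≤ n) :
    ∑ k ∈ Ico 1 n, (n + 1).choose k + (n + 3) = 2 ^ (n + 1) := by
  rw [← Nat.sum_range_choose, sum_range_succ, sum_range_succ, range_eq_Ico,
    sum_eq_sum_Ico_succ_bot (show 0 < n by omega), Nat.choose_zero_right, Nat.choose_self,
    Nat.choose_succ_self_right]
  ring

variable {α : Type*} [DecidableEq α]

/-- On a layer of sets of equal size this says that `𝒜` is a constant-weight code of minimum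
Hamming distance at least `4`. -/
def ExchangeFree (𝒜 : Finset (Finset α)) : Prop :=
  ∀ S ∈ 𝒜, ∀ x ∈ S, ∀ y ∉ S, insert y (S.erase x) ∉ 𝒜

lemma exists_eq_insert_erase_of_subset_of_card {S S' T : Finset α} (hne : S ≠ S')
    (hS : T ⊆ S) (hS' : T ⊆ S') (hcard : #T + 1 = #S) (hcard' : #T + 1 = #S') :
    ∃ x ∈ S, ∃ y ∉ S, S' = insert y (S.erase x) := by
  obtain ⟨x, hxT, rfl⟩ := exists_eq_insert_iff.2 ⟨hS, hcard⟩
  obtain ⟨y, hyT, rfl⟩ := exists_eq_insert_iff.2 ⟨hS', hcard'⟩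
  have hxy : x ≠ y := fun h => hne (h ▸ rfl)
  refine ⟨x, mem_insert_self x T, y, ?_, by rw [erase_insert hxT]⟩
  simp [hxy.symm, hyT]

namespace ExchangeFree

variable {𝒜 : Finset (Finset α)}

lemma mono {ℬ : Finset (Finset α)} (h𝒜 : ExchangeFree 𝒜) (hℬ : ℬ ⊆ 𝒜) : ExchangeFree ℬ :=
  fun S hS x hx y hy h => h𝒜 S (hℬ hS) x hx y hy (hℬ h)

lemma pairwiseDisjoint_powersetCard (h𝒜 : ExchangeFree 𝒜) {k : ℕ}
    (hsized : (𝒜 : Set (Finset α)).Sized (k + 1)) :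
    (𝒜 : Set (Finset α)).PairwiseDisjoint (powersetCard k) := by
  intro S hS S' hS' hne
  refine disjoint_left.2 fun T hT hT' => ?_
  rw [mem_powersetCard] at hT hT'
  obtain ⟨x, hx, y, hy, rfl⟩ := exists_eq_insert_erase_of_subset_of_card hne hT.1 hT'.1
    (by rw [hT.2, hsized hS]) (by rw [hT'.2, hsized hS'])
  exact h𝒜 S hS x hx y hy hS'

lemma add_one_mul_card_le_choose (h𝒜 : ExchangeFree 𝒜) {U : Finset α} (hU : ∀ S ∈ 𝒜, S ⊆ U)
    {k : ℕ} (hsized : (𝒜 : Set (Finset α)).Sized (k + 1)) :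
    (k + 1) * #𝒜 ≤ (#U).choose k := by
  calc (k + 1) * #𝒜 = ∑ S ∈ 𝒜, #(S.powersetCard k) := by
        rw [sum_congr rfl fun S hS => by
            rw [card_powersetCard, hsized hS, Nat.choose_succ_self_right],
          sum_const, smul_eq_mul, mul_comm]
    _ = #(𝒜.biUnion (powersetCard k)) :=
        (card_biUnion (h𝒜.pairwiseDisjoint_powersetCard hsized)).symm
    _ ≤ #(U.powersetCard k) := card_le_card <| biUnion_subset.2 fun S hS =>
        powersetCard_mono (hU S hS)
    _ = (#U).choose k := card_powersetCard k U

lemma card_add_one_mul_card_le_choose (h𝒜 : ExchangeFree 𝒜) {U : Finset α} (hU : ∀ S ∈ 𝒜, S ⊆ U)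
    {k : ℕ} (hsized : (𝒜 : Set (Finset α)).Sized (k + 1)) :
    (#U + 1) * #𝒜 ≤ (#U + 1).choose (k + 1) := by
  refine Nat.le_of_mul_le_mul_right ?_ k.succ_pos
  calc (#U + 1) * #𝒜 * (k + 1) = (#U + 1) * ((k + 1) * #𝒜) := by ring
    _ ≤ (#U + 1) * (#U).choose k := Nat.mul_le_mul_left _ (h𝒜.add_one_mul_card_le_choose hU hsized)
    _ = (#U + 1).choose (k + 1) * (k + 1) := Nat.add_one_mul_choose_eq _ _

lemma card_add_one_mul_card_add_le (h𝒜 : ExchangeFree 𝒜) {U : Finset α} (hUne : U.Nonempty)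
    (h𝒜U : 𝒜 ⊆ U.ssubsets.erase ∅) :
    (#U + 1) * #𝒜 + (#U + 3) ≤ 2 ^ (#U + 1) := by
  have hproper : ∀ S ∈ 𝒜, S ≠ ∅ ∧ S ⊂ U := fun S hS => by
    simpa only [mem_erase, mem_ssubsets] using h𝒜U hS
  have hcard : ∀ S ∈ 𝒜, #S ∈ Ico 1 #U := fun S hS =>
    mem_Ico.2 ⟨card_pos.2 (nonempty_iff_ne_empty.2 (hproper S hS).1),
      card_lt_card (hproper S hS).2⟩
  have hlayer : ∀ k ∈ Ico 1 #U, (#U + 1) * #{S ∈ 𝒜 | #S = k} ≤ (#U + 1).choose k := by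
    intro k hk
    obtain ⟨j, rfl⟩ := Nat.exists_eq_add_of_le' (mem_Ico.1 hk).1
    exact (h𝒜.mono (filter_subset _ _)).card_add_one_mul_card_le_choose
      (fun S hS => (hproper S (mem_filter.1 hS).1).2.subset) fun S hS => (mem_filter.1 hS).2
  calc (#U + 1) * #𝒜 + (#U + 3) = ∑ k ∈ Ico 1 #U, (#U + 1) * #{S ∈ 𝒜 | #S = k} + (#U + 3) := by
        rw [card_eq_sum_card_fiberwise hcard, mul_sum]
    _ ≤ ∑ k ∈ Ico 1 #U, (#U + 1).choose k + (#U + 3) := by gcongr with k hk; exact hlayer k hk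
    _ = 2 ^ (#U + 1) := sum_Ico_choose_add (card_pos.2 hUne)

end ExchangeFree

lemma card_erase_empty_ssubsets_add_two {U : Finset α} (hU : U.Nonempty) :
    #(U.ssubsets.erase ∅) + 2 = 2 ^ #U := by
  rw [card_erase_of_mem (empty_mem_ssubsets hU), ssubsets,
    card_erase_of_mem (mem_powerset_self U), card_powerset]
  have : 2 ≤ 2 ^ #U := Nat.le_self_pow (card_pos.2 hU).ne' 2
  omega

lemma exchangeFree_filter_not_mem {U : Finset α} {𝓘 : Finset (Finset α)}
    (hcover : ∀ I ⊆ U, I.Nonempty → I ≠ U → ∀ x ∈ I, ∀ y ∈ U, y ∉ I →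
      I ∈ 𝓘 ∨ insert y (I.erase x) ∈ 𝓘) :
    ExchangeFree {S ∈ U.ssubsets.erase ∅ | S ∉ 𝓘} := by
  intro S hS x hx y hy hS'
  simp only [mem_filter, mem_erase, mem_ssubsets] at hS hS'
  have hyU : y ∈ U := hS'.1.2.subset (mem_insert_self y _)
  rcases hcover S hS.1.2.subset (nonempty_iff_ne_empty.2 hS.1.1) hS.1.2.ne x hx y hyU hy with h | h
  · exact hS.2 h
  · exact hS'.2 h

theorem le_card_of_forall_mem_or_exchange_mem (U : Finset α) (𝓘 : Finset (Finset α))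
    (hcover : ∀ I ⊆ U, I.Nonempty → I ≠ U → ∀ x ∈ I, ∀ y ∈ U, y ∉ I →
      I ∈ 𝓘 ∨ insert y (I.erase x) ∈ 𝓘) :
    ((#U : ℚ) - 1) / (#U + 1) * (2 ^ #U - 1) ≤ #𝓘 := by
  rcases U.eq_empty_or_nonempty with rfl | hU
  · simp
  set 𝒢 := {S ∈ U.ssubsets.erase ∅ | S ∉ 𝓘}
  have hbound := (exchangeFree_filter_not_mem hcover).card_add_one_mul_card_add_le hU
    (filter_subset _ (U.ssubsets.erase ∅))
  have hsplit : #(U.ssubsets.erase ∅) ≤ #𝒢 + #𝓘 := by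
    rw [← card_filter_add_card_filter_not (· ∉ 𝓘)]
    gcongr
    exact fun S hS => not_not.1 (mem_filter.1 hS).2
  have hcount : 2 ^ #U ≤ #𝒢 + #𝓘 + 2 := by
    rw [← card_erase_empty_ssubsets_add_two hU]; omega
  have hcount' : ((#U : ℚ) + 1) * 2 ^ #U ≤ (#U + 1) * (#𝒢 + #𝓘 + 2) :=
    mul_le_mul_of_nonneg_left (by exact_mod_cast hcount) (by positivity)
  have hbound' : ((#U : ℚ) + 1) * #𝒢 + (#U + 3) ≤ 2 * 2 ^ #U := by
    rw [← pow_succ']; exact_mod_cast hbound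
  rw [div_mul_eq_mul_div, div_le_iff₀ (by positivity)]
  linarith

theorem stmt_17_general (n : ℕ) (𝓘 : Finset (Finset ℕ))
    (hcover : ∀ I : Finset ℕ, I ⊆ Finset.Icc 1 n → I.Nonempty → I ≠ Finset.Icc 1 n →
      ∀ x ∈ I, ∀ y ∈ Finset.Icc 1 n, y ∉ I →
        I ∈ 𝓘 ∨ insert y (I.erase x) ∈ 𝓘) :
    (((n : ℚ) - 1) / ((n : ℚ) + 1)) * (2 ^ n - 1) ≤ (𝓘.card : ℚ) := by
  simpa using le_card_of_forall_mem_or_exchange_mem (Icc 1 n) 𝓘 hcover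

/-- Let `𝓘` be a collection of nonempty proper subsets of `{1,...,n}` such that for
every nonempty proper subset `I` of `{1,...,n}` and every `x ∈ I`, `y ∈ {1,...,n} \ I`,
at least one of `I` and `(I \ {x}) ∪ {y}` belongs to `𝓘`.  Then
`|𝓘| ≥ ((n-1)/(n+1)) · (2^n - 1)`. -/
theorem stmt_17 (n : ℕ) (𝓘 : Finset (Finset ℕ))
    (hmem : ∀ J ∈ 𝓘, J ⊆ Finset.Icc 1 n ∧ J.Nonempty ∧ J ≠ Finset.Icc 1 n)
    (hcover : ∀ I : Finset ℕ, I ⊆ Finset.Icc 1 n → I.Nonempty → I ≠ Finset.Icc 1 n →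
      ∀ x ∈ I, ∀ y ∈ Finset.Icc 1 n, y ∉ I →
        I ∈ 𝓘 ∨ insert y (I.erase x) ∈ 𝓘) :
    (((n : ℚ) - 1) / ((n : ℚ) + 1)) * (2 ^ n - 1) ≤ (𝓘.card : ℚ) :=
  stmt_17_general n 𝓘 hcover
end
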